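/- arXiv:math/0209050 — 2 statements merged into one kernel-verified Lean document; each statement's English description precedes it below -/
import Mathlib

section
/- For an integer k ≥ 0 and s > 0 define P_k(s) = s·e^s·p_k'(s)·I(s) + p_k(s) and Q_k(s) = p_k(s) − s·e^s·I(s)·(p_k(s) − q_k(s)). Then for every s > 0: (i) for every j ≥ 1, Q_j(s) = P_j(s) if and only if q_{j−1}(s) = q_j(s); (ii) for every j ≥ 0, Q_j(s) = P_{j+1}(s) if and only if p_j(s) = p_{j+1}(s). -/
open MeasureTheory ProbabilityTheory Real

open MeasureTheory ProbabilityTheory Real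

/-- Signless Stirling numbers of the first kind: coefficient of `x^j` in `x(x+1)⋯(x+k-1)`. -/
noncomputable def stirling1 (k j : ℕ) : ℝ :=
  (∏ i ∈ Finset.range k, (Polynomial.X + Polynomial.C (i : ℝ))).coeff j

/-- Stirling numbers of the second kind. -/
def stirling2 : ℕ → ℕ → ℕ
  | 0, 0 => 1
  | 0, _ + 1 => 0
  | _ + 1, 0 => 0
  | n + 1, k + 1 => (k + 1) * stirling2 n (k + 1) + stirling2 n k

/-- `p_j(t) = e^{-t} Σ_{k≥j} (t^k/k!) σ₁(k,j)/k!` (terms with `k<j` vanish). -/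
noncomputable def pfn (j : ℕ) (t : ℝ) : ℝ :=
  Real.exp (-t) * ∑' k : ℕ, t ^ k / (Nat.factorial k : ℝ) * (stirling1 k j / (Nat.factorial k : ℝ))

/-- `q_j(t) = e^{-t} Σ_{k≥0} (t^k/(k+1)!) Σ_{i=0}^k σ₁(i,j)/i!`. -/
noncomputable def qfn (j : ℕ) (t : ℝ) : ℝ :=
  Real.exp (-t) * ∑' k : ℕ, t ^ k / (Nat.factorial (k + 1) : ℝ) *
    ∑ i ∈ Finset.range (k + 1), stirling1 i j / (Nat.factorial i : ℝ)

/-- `I(t,s) = ∫_s^t e^{-ξ}/ξ dξ`. -/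
noncomputable def Ifun (t s : ℝ) : ℝ := ∫ ξ in s..t, Real.exp (-ξ) / ξ

/-- `I(s) = ∫_s^∞ e^{-ξ}/ξ dξ`. -/
noncomputable def Iinf (s : ℝ) : ℝ := ∫ ξ in Set.Ioi s, Real.exp (-ξ) / ξ

/-- `I₂(t,s) = ∫_s^t e^{-ξ}/ξ² dξ`. -/
noncomputable def I2fun (t s : ℝ) : ℝ := ∫ ξ in s..t, Real.exp (-ξ) / ξ ^ 2

/-- `I₂(s) = ∫_s^∞ e^{-ξ}/ξ² dξ`. -/
noncomputable def I2inf (s : ℝ) : ℝ := ∫ ξ in Set.Ioi s, Real.exp (-ξ) / ξ ^ 2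

/-- `J(t) = ∫_0^t (e^ξ - 1)/ξ dξ`. -/
noncomputable def Jfun (t : ℝ) : ℝ := ∫ ξ in (0:ℝ)..t, (Real.exp ξ - 1) / ξ

/-!
Writing `A = s e^s I(s)`, everything follows from the differential relation
`p_{j+1}' = q_j - p_{j+1}` (termwise differentiation, using `σ₁(k+1,j+1) = k! Σ_{i≤k} σ₁(i,j)/i!`):
it gives `Q_j - P_j = A (q_j - q_{j-1})` and `Q_j - P_{j+1} = (1 - A) (p_j - p_{j+1})`.
Both factors are nonzero because `0 < I(s) < e^{-s}/s`, the upper bound coming from `1/ξ < 1/s`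
on `(s, ∞)`.
-/

open scoped Nat

open Set

lemma stirling1_zero (j : ℕ) : stirling1 0 j = if j = 0 then 1 else 0 := by
  simp [stirling1, Polynomial.coeff_one]

lemma stirling1_succ_zero (k : ℕ) : stirling1 (k + 1) 0 = k * stirling1 k 0 := by
  rw [stirling1, Finset.prod_range_succ, mul_add, Polynomial.coeff_add,
    Polynomial.coeff_mul_X_zero, Polynomial.coeff_mul_C, ← stirling1]
  ring

lemma stirling1_succ_succ (k j : ℕ) :
    stirling1 (k + 1) (j + 1) = stirling1 k j + k * stirling1 k (j + 1) := by
  rw [stirling1, Finset.prod_range_succ, mul_add, Polynomial.coeff_add, Polynomial.coeff_mul_X,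
    Polynomial.coeff_mul_C, ← stirling1, ← stirling1]
  ring

lemma stirling1_nonneg (k j : ℕ) : 0 ≤ stirling1 k j := by
  induction k generalizing j with
  | zero => rw [stirling1_zero]; split <;> norm_num
  | succ k ih =>
    cases j with
    | zero => rw [stirling1_succ_zero]; have := ih 0; positivity
    | succ j => rw [stirling1_succ_succ]; have := ih j; have := ih (j + 1); positivity

lemma stirling1_le_factorial (k j : ℕ) : stirling1 k j ≤ k ! := by
  induction k generalizing j with
  | zero => rw [stirling1_zero]; split <;> norm_num
  | succ k ih =>
    have hk : (0 : ℝ) ≤ k := k.cast_nonneg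
    rw [Nat.factorial_succ, Nat.cast_mul, Nat.cast_succ]
    cases j with
    | zero => rw [stirling1_succ_zero]; nlinarith [ih 0, stirling1_nonneg k 0]
    | succ j => rw [stirling1_succ_succ]; nlinarith [ih j, ih (j + 1)]

lemma abs_stirling1_div_factorial_le_one (k j : ℕ) : |stirling1 k j / k !| ≤ 1 := by
  rw [abs_of_nonneg (by have := stirling1_nonneg k j; positivity),
    div_le_one (mod_cast k.factorial_pos)]
  exact stirling1_le_factorial k j

lemma stirling1_succ_succ_eq_factorial_mul_sum (k j : ℕ) :
    stirling1 (k + 1) (j + 1) = k ! * ∑ i ∈ Finset.range (k + 1), stirling1 i j / i ! := by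
  induction k with
  | zero => simp [stirling1_succ_succ, stirling1_zero]
  | succ k ih =>
    rw [Finset.sum_range_succ, stirling1_succ_succ (k + 1) j, ih, Nat.factorial_succ]
    have : (k ! : ℝ) ≠ 0 := mod_cast k.factorial_ne_zero
    push_cast
    field_simp
    ring

section ExponentialSeries

variable {c : ℕ → ℝ} {C : ℝ}

lemma summable_pow_div_factorial_mul (hc : ∀ k, |c k| ≤ C) (t : ℝ) :
    Summable fun k ↦ t ^ k / k ! * c k := by
  refine .of_norm_bounded ((Real.summable_pow_div_factorial |t|).mul_right C) fun k ↦ ?_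
  rw [Real.norm_eq_abs, abs_mul, abs_div, abs_pow, Nat.abs_cast]
  exact mul_le_mul_of_nonneg_left (hc k) (by positivity)

theorem hasDerivAt_tsum_pow_div_factorial_mul (hc : ∀ k, |c k| ≤ C) (s : ℝ) :
    HasDerivAt (fun t ↦ ∑' k, t ^ k / k ! * c k) (∑' k, s ^ k / k ! * c (k + 1)) s := by
  have hshift : (fun t ↦ ∑' k, t ^ k / k ! * c k) =
      fun t ↦ c 0 + ∑' k, t ^ (k + 1) / (k + 1)! * c (k + 1) := by
    ext t
    rw [(summable_pow_div_factorial_mul hc t).tsum_eq_zero_add]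
    simp
  have hterm (k : ℕ) (t : ℝ) :
      HasDerivAt (fun t ↦ t ^ (k + 1) / (k + 1)! * c (k + 1)) (t ^ k / k ! * c (k + 1)) t := by
    refine (((hasDerivAt_pow (k + 1) t).div_const _).mul_const _).congr_deriv ?_
    have : (k ! : ℝ) ≠ 0 := mod_cast k.factorial_ne_zero
    rw [Nat.factorial_succ]
    push_cast
    field_simp
  set R := |s| + 1
  have hbound (k : ℕ) (t : ℝ) (ht : t ∈ Metric.ball 0 R) :
      ‖t ^ k / k ! * c (k + 1)‖ ≤ C * (R ^ k / k !) := by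
    rw [mem_ball_zero_iff, Real.norm_eq_abs] at ht
    rw [Real.norm_eq_abs, abs_mul, abs_div, abs_pow, Nat.abs_cast, mul_comm]
    gcongr
    · exact (abs_nonneg _).trans (hc 0)
    · exact hc (k + 1)
  have hs : s ∈ Metric.ball 0 R := by rw [mem_ball_zero_iff, Real.norm_eq_abs]; linarith
  rw [hshift]
  exact (hasDerivAt_tsum_of_isPreconnected ((Real.summable_pow_div_factorial R).mul_left C)
    Metric.isOpen_ball (convex_ball 0 R).isPreconnected (fun k t _ ↦ hterm k t) hbound hs
    ((summable_nat_add_iff 1).2 (summable_pow_div_factorial_mul hc s)) hs).const_add (c 0)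

end ExponentialSeries

theorem hasDerivAt_pfn_succ (j : ℕ) (s : ℝ) :
    HasDerivAt (pfn (j + 1)) (qfn j s - pfn (j + 1) s) s := by
  have hcoeff (k : ℕ) : s ^ k / k ! * (stirling1 (k + 1) (j + 1) / (k + 1)!) =
      s ^ k / (k + 1)! * ∑ i ∈ Finset.range (k + 1), stirling1 i j / i ! := by
    have : (k ! : ℝ) ≠ 0 := mod_cast k.factorial_ne_zero
    rw [stirling1_succ_succ_eq_factorial_mul_sum]
    field_simp
  have hseries := hasDerivAt_tsum_pow_div_factorial_mul
    (fun k ↦ abs_stirling1_div_factorial_le_one k (j + 1)) s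
  refine ((hasDerivAt_neg s).exp.mul hseries).congr_deriv ?_
  simp only [hcoeff, pfn, qfn]
  ring

section ExponentialIntegral

lemma setIntegral_Ioi_pos {f : ℝ → ℝ} {a : ℝ} (hf : IntegrableOn f (Ioi a))
    (hpos : ∀ x ∈ Ioi a, 0 < f x) : 0 < ∫ x in Ioi a, f x := by
  rw [setIntegral_pos_iff_support_of_nonneg_ae
    ((ae_restrict_iff' measurableSet_Ioi).2 (.of_forall fun x hx ↦ (hpos x hx).le)) hf]
  rw [inter_eq_right.2 fun x hx ↦ Function.mem_support.2 (hpos x hx).ne', Real.volume_Ioi]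
  exact ENNReal.zero_lt_top

variable {s : ℝ}

lemma integrableOn_exp_neg_div_self (hs : 0 < s) :
    IntegrableOn (fun ξ ↦ exp (-ξ) / ξ) (Ioi s) := by
  refine ((integrableOn_exp_neg_Ioi s).div_const s).mono' ?_ ?_
  · exact ((continuous_exp.comp continuous_neg).continuousOn.div continuousOn_id
      fun x hx ↦ (hs.trans hx).ne').aestronglyMeasurable measurableSet_Ioi
  · refine (ae_restrict_iff' measurableSet_Ioi).2 (.of_forall fun x hx ↦ ?_)
    rw [Real.norm_eq_abs, abs_of_nonneg (div_nonneg (exp_nonneg _) (hs.trans hx).le)]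
    gcongr
    exact hx.le

lemma Iinf_pos (hs : 0 < s) : 0 < Iinf s :=
  setIntegral_Ioi_pos (integrableOn_exp_neg_div_self hs) fun _ hx ↦
    div_pos (exp_pos _) (hs.trans hx)

lemma Iinf_lt_exp_neg_div (hs : 0 < s) : Iinf s < exp (-s) / s := by
  have hgap := setIntegral_Ioi_pos (f := fun x ↦ exp (-x) / s - exp (-x) / x)
    (((integrableOn_exp_neg_Ioi s).div_const s).sub (integrableOn_exp_neg_div_self hs))
    fun x hx ↦ sub_pos.2 (div_lt_div_of_pos_left (exp_pos (-x)) hs hx)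
  rwa [integral_sub ((integrableOn_exp_neg_Ioi s).div_const s) (integrableOn_exp_neg_div_self hs),
    integral_div, integral_exp_neg_Ioi, sub_pos] at hgap

end ExponentialIntegral

/-- Theorem 5 (duality): with `P_k(s) = s·e^s·p_k'(s)·I(s) + p_k(s)` and
`Q_k(s) = p_k(s) - s·e^s·I(s)·(p_k(s) - q_k(s))`, for every `s > 0`:
(i) for `j ≥ 1`, `Q_j(s) = P_j(s) ↔ q_{j-1}(s) = q_j(s)`;
(ii) for `j ≥ 0`, `Q_j(s) = P_{j+1}(s) ↔ p_j(s) = p_{j+1}(s)`. -/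
theorem stmt7 (s : ℝ) (hs : 0 < s) :
    (∀ j : ℕ, 1 ≤ j →
      (pfn j s - s * Real.exp s * Iinf s * (pfn j s - qfn j s) =
          s * Real.exp s * deriv (pfn j) s * Iinf s + pfn j s ↔
        qfn (j - 1) s = qfn j s)) ∧
    (∀ j : ℕ,
      (pfn j s - s * Real.exp s * Iinf s * (pfn j s - qfn j s) =
          s * Real.exp s * deriv (pfn (j + 1)) s * Iinf s + pfn (j + 1) s ↔
        pfn j s = pfn (j + 1) s)) := by
  have hweight_pos : 0 < s * exp s * Iinf s := mul_pos (by positivity) (Iinf_pos hs)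
  have hweight_lt_one : s * exp s * Iinf s < 1 :=
    calc s * exp s * Iinf s < s * exp s * (exp (-s) / s) := by
          gcongr; exact Iinf_lt_exp_neg_div hs
      _ = 1 := by rw [exp_neg]; field_simp
  refine ⟨fun j hj ↦ ?_, fun j ↦ ?_⟩
  · obtain ⟨m, rfl⟩ := Nat.exists_eq_add_of_le' hj
    rw [Nat.add_sub_cancel, (hasDerivAt_pfn_succ m s).deriv]
    constructor
    · intro h
      exact mul_left_cancel₀ hweight_pos.ne' (by linear_combination -h)
    · intro h
      linear_combination (-(s * exp s * Iinf s)) * h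
  · rw [(hasDerivAt_pfn_succ j s).deriv]
    constructor
    · intro h
      exact mul_left_cancel₀ (sub_ne_zero.2 hweight_lt_one.ne') (by linear_combination h)
    · intro h
      linear_combination (1 - s * exp s * Iinf s) * h
end

section
/- For every integer k ≥ 0 and every t > 0, the series Σ_{j=k}^∞ σ₂(j,k)·k!·(−1)^{j−k}·q_j(t) converges and its sum equals i_k(t) := (1/t)·∫_0^t e^{−s}·(s^k/k!) ds. -/
open MeasureTheory ProbabilityTheory Real

open MeasureTheory ProbabilityTheory Real

/-!
Expanding every `q_{k+j}(t)` into its defining series turns the left-hand side into a double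
series over `(j, m)`. It converges absolutely because `σ₂(k+j,k) ≤ (k+1)^m` and
`Σ_{i≤m} σ₁(i,k+j)/i! ≤ m+1` on the terms that do not vanish (those with `k+j ≤ m`). Summed over `j`
first, each column is a finite sum which the orthogonality relation
`Σ_j (-1)^j σ₁(i,j) σ₂(j,k) = (-1)^i δ_{ik}` collapses to `e^{-t} t^m/(m+1)!` for `m ≥ k`
(and to `0` otherwise); these add up to `(1 - e^{-t} Σ_{n≤k} tⁿ/n!)/t`, which is `i_k(t)`.
-/

open Finset Nat

lemma stirling1_eq_stirlingFirst (k j : ℕ) : stirling1 k j = stirlingFirst k j := by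
  induction k generalizing j with
  | zero => cases j <;> simp [stirling1, Polynomial.coeff_one]
  | succ k ih =>
    simp only [stirling1, prod_range_succ, mul_add, Polynomial.coeff_add, Polynomial.coeff_mul_C]
    cases j with
    | zero =>
      rw [Polynomial.coeff_mul_X_zero, ← stirling1, ih]
      cases k <;> simp
    | succ j =>
      rw [Polynomial.coeff_mul_X, ← stirling1, ← stirling1, ih, ih, stirlingFirst_succ_succ]
      push_cast
      ring

lemma stirling2_eq_stirlingSecond (n k : ℕ) : stirling2 n k = stirlingSecond n k := by
  induction n generalizing k with
  | zero => cases k <;> rfl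
  | succ n ih => cases k <;> simp [stirling2, stirlingSecond_succ_succ, ih]

lemma Nat.stirlingFirst_le_factorial (n k : ℕ) : stirlingFirst n k ≤ n ! := by
  induction n generalizing k with
  | zero => cases k <;> simp
  | succ n ih =>
    cases k with
    | zero => simp
    | succ k =>
      rw [stirlingFirst_succ_succ, factorial_succ, add_mul, one_mul]
      exact add_le_add (Nat.mul_le_mul_left n (ih _)) (ih _)

lemma Nat.stirlingSecond_le_pow (n k : ℕ) : stirlingSecond n k ≤ (k + 1) ^ n := by
  induction n generalizing k with
  | zero => cases k <;> simp
  | succ n ih =>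
    cases k with
    | zero => simp
    | succ k =>
      have hk : stirlingSecond n k ≤ (k + 1 + 1) ^ n :=
        (ih k).trans (Nat.pow_le_pow_left (Nat.le_succ (k + 1)) n)
      calc stirlingSecond (n + 1) (k + 1)
          = (k + 1) * stirlingSecond n (k + 1) + stirlingSecond n k := stirlingSecond_succ_succ n k
        _ ≤ (k + 1) * (k + 1 + 1) ^ n + (k + 1 + 1) ^ n := by gcongr; exact ih _
        _ = (k + 1 + 1) ^ (n + 1) := by ring

theorem Nat.sum_neg_one_pow_mul_stirlingFirst_mul_stirlingSecond {R : Type*} [CommRing R]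
    (n k : ℕ) {N : ℕ} (hN : n < N) :
    ∑ j ∈ range N, (-1 : R) ^ j * stirlingFirst n j * stirlingSecond j k =
      if n = k then (-1) ^ n else 0 := by
  induction n generalizing k N with
  | zero =>
    rw [sum_eq_single_of_mem 0 (mem_range.2 hN) fun j _ hj => by
      obtain ⟨j, rfl⟩ := exists_eq_succ_of_ne_zero hj; simp]
    cases k <;> simp
  | succ n ih =>
    obtain ⟨M, rfl⟩ := exists_eq_succ_of_ne_zero (by omega : N ≠ 0)
    have hM : n < M := by omega
    rw [sum_range_succ']
    cases k with
    | zero => simp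
    | succ k =>
      -- Writing `A n k` for the sum, the two recurrences give
      -- `A (n + 1) (k + 1) = (n - (k + 1)) * A n (k + 1) - A n k`.
      have hshift := ih (k + 1) (N := M + 1) (by omega)
      rw [sum_range_succ'] at hshift
      have hsecond :
          ∑ j ∈ range M, (-1 : R) ^ j * stirlingFirst n j * stirlingSecond (j + 1) (k + 1) =
          (k + 1) * ∑ j ∈ range M, (-1 : R) ^ j * stirlingFirst n j * stirlingSecond j (k + 1) +
            ∑ j ∈ range M, (-1 : R) ^ j * stirlingFirst n j * stirlingSecond j k := by
        rw [mul_sum, ← sum_add_distrib]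
        refine sum_congr rfl fun j _ => ?_
        rw [stirlingSecond_succ_succ]
        push_cast
        ring
      rw [ih _ hM, ih _ hM] at hsecond
      have hfirst : ∑ j ∈ range M,
          (-1 : R) ^ (j + 1) * stirlingFirst (n + 1) (j + 1) * stirlingSecond (j + 1) (k + 1) =
          -(n * ∑ j ∈ range M,
              (-1 : R) ^ j * stirlingFirst n (j + 1) * stirlingSecond (j + 1) (k + 1) +
            ∑ j ∈ range M, (-1 : R) ^ j * stirlingFirst n j * stirlingSecond (j + 1) (k + 1)) := by
        rw [mul_sum, ← sum_add_distrib, ← sum_neg_distrib]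
        refine sum_congr rfl fun j _ => ?_
        rw [stirlingFirst_succ_succ]
        push_cast
        ring
      simp only [stirlingSecond_zero_succ, cast_zero, mul_zero, add_zero, pow_succ, mul_neg_one,
        neg_mul, sum_neg_distrib, neg_eq_iff_eq_neg] at hshift
      rw [hfirst, hsecond, hshift]
      simp only [stirlingSecond_zero_succ, cast_zero, mul_zero, add_zero, add_left_inj]
      split_ifs <;> first | omega | (subst_vars; push_cast; ring)

theorem Nat.sum_neg_one_pow_mul_stirlingSecond_add_mul_stirlingFirst {R : Type*} [CommRing R]
    {i m : ℕ} (k : ℕ) (hi : i ≤ m) :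
    ∑ j ∈ range (m + 1), (-1 : R) ^ j * stirlingSecond (k + j) k * stirlingFirst i (k + j) =
      if i = k then 1 else 0 := by
  have h := sum_neg_one_pow_mul_stirlingFirst_mul_stirlingSecond (R := R) i k
    (N := k + (m + 1)) (by omega)
  rw [sum_range_add, sum_eq_zero fun j hj => by
    rw [stirlingSecond_eq_zero_of_lt (mem_range.1 hj)]; simp, zero_add] at h
  have hsign : ((-1 : R) ^ k) ^ 2 = 1 := by rw [← pow_mul, mul_comm, pow_mul]; simp
  calc ∑ j ∈ range (m + 1), (-1 : R) ^ j * stirlingSecond (k + j) k * stirlingFirst i (k + j)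
      = (-1) ^ k * ∑ j ∈ range (m + 1),
          (-1 : R) ^ (k + j) * stirlingFirst i (k + j) * stirlingSecond (k + j) k := by
        rw [mul_sum]
        refine sum_congr rfl fun j _ => ?_
        linear_combination
          -(-1 : R) ^ j * stirlingSecond (k + j) k * stirlingFirst i (k + j) * hsign
    _ = if i = k then 1 else 0 := by
        rw [h]
        split_ifs with hik
        · rw [hik, ← sq, hsign]
        · rw [mul_zero]

lemma sum_range_stirling1_div_factorial_eq_zero {m n : ℕ} (h : m < n) :
    ∑ i ∈ range (m + 1), stirling1 i n / i ! = 0 :=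
  sum_eq_zero fun i hi => by
    rw [mem_range] at hi
    rw [stirling1_eq_stirlingFirst, stirlingFirst_eq_zero_of_lt (by omega), cast_zero, zero_div]

lemma sum_range_stirling1_div_factorial_mem_Icc (m n : ℕ) :
    ∑ i ∈ range (m + 1), stirling1 i n / i ! ∈ Set.Icc (0 : ℝ) (m + 1) := by
  have hle : ∀ i, stirling1 i n / i ! ≤ 1 := fun i => by
    rw [div_le_one (by positivity), stirling1_eq_stirlingFirst]
    exact_mod_cast stirlingFirst_le_factorial i n
  refine ⟨sum_nonneg fun i _ => by rw [stirling1_eq_stirlingFirst]; positivity, ?_⟩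
  simpa using sum_le_sum fun i (_ : i ∈ range (m + 1)) => hle i

noncomputable def inversionTerm (k : ℕ) (t : ℝ) (p : ℕ × ℕ) : ℝ :=
  (stirling2 (k + p.1) k : ℝ) * (k ! : ℝ) * (-1) ^ p.1 *
    (exp (-t) * (t ^ p.2 / ((p.2 + 1)! : ℝ) * ∑ i ∈ range (p.2 + 1), stirling1 i (k + p.1) / i !))

lemma abs_inversionTerm_le (k : ℕ) (t : ℝ) (j m : ℕ) :
    |inversionTerm k t (j, m)| ≤
      k ! * exp (-t) * ((1 / 2) ^ j * ((2 * (k + 1) * |t|) ^ m / m !)) := by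
  rcases lt_or_ge m (k + j) with hm | hm
  · rw [inversionTerm, sum_range_stirling1_div_factorial_eq_zero hm]
    simp only [mul_zero, abs_zero]
    positivity
  obtain ⟨hD0, hD⟩ := sum_range_stirling1_div_factorial_mem_Icc m (k + j)
  set D := ∑ i ∈ range (m + 1), stirling1 i (k + j) / (i ! : ℝ) with hD_def
  have hS : (stirling2 (k + j) k : ℝ) ≤ (k + 1) ^ m := by
    rw [stirling2_eq_stirlingSecond]
    exact_mod_cast (stirlingSecond_le_pow _ _).trans (Nat.pow_le_pow_right k.succ_pos (by omega))
  have hfac : |t| ^ m / ((m + 1)! : ℝ) * D ≤ |t| ^ m / m ! := by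
    calc |t| ^ m / ((m + 1)! : ℝ) * D = |t| ^ m / m ! * (D / (m + 1)) := by
          push_cast [factorial_succ]
          field_simp
      _ ≤ |t| ^ m / m ! * 1 := by
          gcongr
          rwa [div_le_one (by positivity)]
      _ = |t| ^ m / m ! := mul_one _
  have htwo : (1 : ℝ) ≤ (1 / 2) ^ j * 2 ^ m := by
    rw [one_div_pow, div_mul_eq_mul_div, one_mul, one_le_div (by positivity)]
    exact pow_le_pow_right₀ one_le_two (by omega)
  calc |inversionTerm k t (j, m)|
      = k ! * exp (-t) * (stirling2 (k + j) k * (|t| ^ m / ((m + 1)! : ℝ) * D)) := by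
        simp only [inversionTerm, ← hD_def, abs_mul, abs_div, abs_pow, abs_neg, abs_one, one_pow,
          abs_of_nonneg hD0, Nat.abs_cast, abs_exp]
        ring
    _ ≤ k ! * exp (-t) * ((k + 1) ^ m * (|t| ^ m / m !)) := by gcongr
    _ ≤ k ! * exp (-t) * ((1 / 2) ^ j * 2 ^ m * ((k + 1) ^ m * (|t| ^ m / m !))) := by
        gcongr k ! * exp (-t) * ?_
        exact le_mul_of_one_le_left (by positivity) htwo
    _ = k ! * exp (-t) * ((1 / 2) ^ j * ((2 * (k + 1) * |t|) ^ m / m !)) := by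
        rw [mul_pow, mul_pow]
        ring

lemma summable_inversionTerm (k : ℕ) (t : ℝ) : Summable (inversionTerm k t) := by
  refine Summable.of_norm_bounded ?_ fun p => abs_inversionTerm_le k t p.1 p.2
  exact (summable_geometric_two.mul_of_nonneg (Real.summable_pow_div_factorial _)
    (fun _ => by positivity) (fun _ => by positivity)).mul_left _

lemma hasSum_inversionTerm_column (k : ℕ) (t : ℝ) (m : ℕ) :
    HasSum (fun j => inversionTerm k t (j, m))
      (if k ≤ m then exp (-t) * (t ^ m / ((m + 1)! : ℝ)) else 0) := by
  have hzero : ∀ j ∉ range (m + 1), inversionTerm k t (j, m) = 0 := fun j hj => by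
    rw [inversionTerm, sum_range_stirling1_div_factorial_eq_zero (by rw [mem_range] at hj; omega)]
    simp
  suffices hcol : ∑ j ∈ range (m + 1), inversionTerm k t (j, m) =
      if k ≤ m then exp (-t) * (t ^ m / ((m + 1)! : ℝ)) else 0 from
    hcol ▸ hasSum_sum_of_ne_finset_zero hzero
  calc ∑ j ∈ range (m + 1), inversionTerm k t (j, m)
      = exp (-t) * (t ^ m / ((m + 1)! : ℝ)) * (k ! * ∑ i ∈ range (m + 1), (i ! : ℝ)⁻¹ *
          ∑ j ∈ range (m + 1),
            (-1 : ℝ) ^ j * stirlingSecond (k + j) k * stirlingFirst i (k + j)) := by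
        simp only [inversionTerm, stirling2_eq_stirlingSecond, stirling1_eq_stirlingFirst, mul_sum]
        rw [sum_comm]
        exact sum_congr rfl fun _ _ => sum_congr rfl fun _ _ => by ring
    _ = exp (-t) * (t ^ m / ((m + 1)! : ℝ)) * (k ! * ∑ i ∈ range (m + 1), (i ! : ℝ)⁻¹ *
          if i = k then 1 else 0) := by
        congr 2
        exact sum_congr rfl fun i hi => by
          rw [sum_neg_one_pow_mul_stirlingSecond_add_mul_stirlingFirst k (mem_range_succ_iff.1 hi)]
    _ = if k ≤ m then exp (-t) * (t ^ m / ((m + 1)! : ℝ)) else 0 := by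
        simp only [mul_ite, mul_one, mul_zero, sum_ite_eq', mem_range_succ_iff]
        split_ifs <;> field_simp

lemma hasSum_ite_exp_neg_mul_pow_div_factorial_succ (k : ℕ) {t : ℝ} (ht : t ≠ 0) :
    HasSum (fun m => if k ≤ m then exp (-t) * (t ^ m / ((m + 1)! : ℝ)) else 0)
      (1 / t * (1 - exp (-t) * ∑ n ∈ range (k + 1), t ^ n / n !)) := by
  have hexp : HasSum (fun n => t ^ n / (n ! : ℝ)) (exp t) := by
    rw [Real.exp_eq_exp_ℝ]
    exact NormedSpace.expSeries_div_hasSum_exp t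
  have htail := ((hasSum_nat_add_iff' (k + 1)).2 hexp).mul_left (exp (-t) / t)
  rw [← hasSum_nat_add_iff' k, sum_eq_zero fun i hi => if_neg (by simpa using hi), sub_zero]
  have hsum : exp (-t) / t * (exp t - ∑ i ∈ range (k + 1), t ^ i / i !) =
      1 / t * (1 - exp (-t) * ∑ n ∈ range (k + 1), t ^ n / n !) := by
    rw [mul_sub, div_mul_eq_mul_div, ← exp_add, neg_add_cancel, exp_zero]
    ring
  refine hsum ▸ htail.congr_fun fun n => ?_
  rw [if_pos (by omega), show n + (k + 1) = n + k + 1 by ring, pow_succ]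
  field_simp

lemma hasDerivAt_sum_range_pow_div_factorial (k : ℕ) (s : ℝ) :
    HasDerivAt (fun s => ∑ n ∈ range (k + 1), s ^ n / (n ! : ℝ))
      (∑ n ∈ range k, s ^ n / (n ! : ℝ)) s := by
  induction k with
  | zero => simpa using hasDerivAt_const s (1 : ℝ)
  | succ k ih =>
    simp only [sum_range_succ _ (k + 1)]
    refine (ih.add ((hasDerivAt_pow (k + 1) s).div_const ((k + 1)! : ℝ))).congr_deriv ?_
    rw [sum_range_succ _ k]
    push_cast [factorial_succ]
    field_simp

lemma integral_exp_neg_mul_pow_div_factorial (k : ℕ) (t : ℝ) :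
    ∫ s in (0 : ℝ)..t, exp (-s) * s ^ k / k ! =
      1 - exp (-t) * ∑ n ∈ range (k + 1), t ^ n / n ! := by
  have hderiv (s : ℝ) : HasDerivAt (fun s => -(exp (-s) * ∑ n ∈ range (k + 1), s ^ n / (n ! : ℝ)))
      (exp (-s) * s ^ k / k !) s := by
    refine (((hasDerivAt_neg s).exp).mul
      (hasDerivAt_sum_range_pow_div_factorial k s)).neg.congr_deriv ?_
    rw [sum_range_succ]
    ring
  rw [intervalIntegral.integral_eq_sub_of_hasDerivAt (fun s _ => hderiv s)
    (Continuous.intervalIntegrable (by fun_prop) 0 t)]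
  have h0 : ∑ n ∈ range (k + 1), (0 : ℝ) ^ n / n ! = 1 := by simp [sum_range_succ']
  rw [h0, neg_zero, exp_zero]
  ring

/-- Inversion formula for the `q_j`'s: for every `k ≥ 0` and `t > 0`,
`Σ_{j=k}^∞ σ₂(j,k)·k!·(-1)^{j-k}·q_j(t)` converges with sum
`i_k(t) = (1/t)∫_0^t e^{-s} s^k/k! ds`. -/
theorem stmt10 (k : ℕ) (t : ℝ) (ht : 0 < t) :
    HasSum (fun j : ℕ =>
        (stirling2 (k + j) k : ℝ) * (Nat.factorial k : ℝ) * (-1) ^ j * qfn (k + j) t)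
      ((1 / t) * ∫ s in (0:ℝ)..t, Real.exp (-s) * s ^ k / (Nat.factorial k : ℝ)) := by
  have hF := summable_inversionTerm k t
  have hrows (j : ℕ) : HasSum (fun m => inversionTerm k t (j, m))
      ((stirling2 (k + j) k : ℝ) * k ! * (-1) ^ j * qfn (k + j) t) := by
    rw [qfn, ← tsum_mul_left, ← tsum_mul_left]
    exact (hF.prod_factor j).hasSum
  have hcols : HasSum (fun m => if k ≤ m then exp (-t) * (t ^ m / ((m + 1)! : ℝ)) else 0)
      (∑' p, inversionTerm k t p) := by
    have h := ((Equiv.prodComm ℕ ℕ).summable_iff.2 hF).hasSum.prod_fiberwise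
      (hasSum_inversionTerm_column k t)
    rwa [Function.comp_def, Equiv.tsum_eq] at h
  rw [integral_exp_neg_mul_pow_div_factorial,
    (hasSum_ite_exp_neg_mul_pow_div_factorial_succ k ht.ne').unique hcols]
  exact hF.hasSum.prod_fiberwise hrows
end
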